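/- Let T > 0 and (Q_k)_{k≥0} the orthonormal polynomials on [0,T]. Then for every k ≥ 0, the coefficient c_{k,k+1} = ∫₀ᵀ (∫₀ᵗ Q_k(s) ds) Q_{k+1}(t) dt equals T·α_k where α_k = 1/(2√((2k+1)(2k+3))). -/

import Mathlib

/-
The antiderivative `F` of `Q k` is a polynomial of degree `k + 1`, and integrating a polynomial
of degree `≤ k + 1` against `Q (k + 1)` only sees its top coefficient, so the integral equals
`lc(Q k) / ((k + 1) lc(Q (k + 1)))`. To find the leading coefficients on an interval `[a, b]`,
compare `Q k` with the Rodrigues polynomial `R k = D^k ((x - a)(x - b))^k`: `k`-fold integration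
by parts shows that it is also orthogonal to all polynomials of lower degree, so `Q k` and `R k`
are proportional and `lc(Q k)^2 = lc(R k)^2 / ‖R k‖^2 = (2k + 1) C(2k, k)^2 / (b - a)^(2k + 1)`,
the norm being a beta integral. The ratio of consecutive leading coefficients then comes from
`(k + 1) C(2k + 2, k + 1) = 2 (2k + 1) C(2k, k)`.
-/

open Polynomial MeasureTheory Nat

namespace Polynomial

theorem iterate_derivative_natDegree {R : Type*} [CommSemiring R] (p : R[X]) :
    derivative^[p.natDegree] p = C ((p.natDegree ! : R) * p.leadingCoeff) := by
  have hle : (derivative^[p.natDegree] p).natDegree ≤ 0 :=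
    (natDegree_iterate_derivative p _).trans_eq (Nat.sub_self _)
  rw [eq_C_of_natDegree_le_zero hle, coeff_iterate_derivative, zero_add, descFactorial_self,
    nsmul_eq_mul, leadingCoeff]

theorem degree_sub_C_div_mul_lt {K : Type*} [Field K] {p r : K[X]} {k : ℕ}
    (hr : r.degree = k) (hp : p.degree ≤ k) :
    (p - C (p.coeff k / r.coeff k) * r).degree < k := by
  rw [degree_lt_iff_coeff_zero]
  intro m hm
  rcases hm.eq_or_lt with rfl | hlt
  · simp [div_mul_cancel₀ _ (coeff_ne_zero_of_eq_degree hr)]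
  · have hlt' : (k : WithBot ℕ) < m := by exact_mod_cast hlt
    simp [coeff_eq_zero_of_degree_lt (hp.trans_lt hlt'),
      coeff_eq_zero_of_degree_lt (hr.trans_lt hlt')]

theorem isRoot_iterate_derivative_of_pow_dvd {R : Type*} [CommRing R] {p : R[X]} {r : R}
    {k m : ℕ} (h : (X - C r) ^ k ∣ p) (hm : m < k) : (derivative^[m] p).IsRoot r :=
  dvd_iff_isRoot.mp <| (dvd_pow_self _ (Nat.sub_ne_zero_of_lt hm)).trans
    (pow_sub_dvd_iterate_derivative_of_pow_dvd _ h)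

variable {K : Type*} [Field K]

/-- The antiderivative of `p` vanishing at `0`. -/
noncomputable def antideriv (p : K[X]) : K[X] :=
  ∑ n ∈ p.support, C (p.coeff n / (n + 1)) * X ^ (n + 1)

theorem coeff_antideriv_zero (p : K[X]) : (antideriv p).coeff 0 = 0 := by
  simp [antideriv, finsetSum_coeff]

theorem coeff_antideriv_succ (p : K[X]) (n : ℕ) :
    (antideriv p).coeff (n + 1) = p.coeff n / (n + 1) := by
  by_cases hn : n ∈ p.support
  · simp [antideriv, finsetSum_coeff, hn]
  · simp [antideriv, finsetSum_coeff, hn, notMem_support_iff.1 hn]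

theorem derivative_antideriv [CharZero K] (p : K[X]) : derivative (antideriv p) = p := by
  ext n
  rw [coeff_derivative, coeff_antideriv_succ]
  field_simp

theorem natDegree_antideriv_le (p : K[X]) : (antideriv p).natDegree ≤ p.natDegree + 1 := by
  rw [natDegree_le_iff_coeff_eq_zero]
  rintro (_ | n) hn
  · omega
  · rw [coeff_antideriv_succ, coeff_eq_zero_of_natDegree_lt (by omega), zero_div]

theorem integral_eval_eq_eval_antideriv (p : ℝ[X]) (t : ℝ) :
    ∫ s in (0 : ℝ)..t, p.eval s = (antideriv p).eval t := by
  rw [intervalIntegral.integral_eq_sub_of_hasDerivAt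
      (fun x _ => derivative_antideriv p ▸ (antideriv p).hasDerivAt x)
      (p.continuous.intervalIntegrable _ _),
    ← coeff_zero_eq_eval_zero, coeff_antideriv_zero, sub_zero]

theorem intervalIntegrable_eval_mul_eval (p q : ℝ[X]) (a b : ℝ) :
    IntervalIntegrable (fun x => p.eval x * q.eval x) volume a b :=
  (p.continuous.mul q.continuous).intervalIntegrable _ _

theorem integral_eval_mul_eval_derivative (p q : ℝ[X]) (a b : ℝ) :
    ∫ x in a..b, p.eval x * (derivative q).eval x
      = p.eval b * q.eval b - p.eval a * q.eval a
        - ∫ x in a..b, (derivative p).eval x * q.eval x :=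
  intervalIntegral.integral_mul_deriv_eq_deriv_mul (fun x _ => p.hasDerivAt x)
    (fun x _ => q.hasDerivAt x) ((derivative p).continuous.intervalIntegrable _ _)
    ((derivative q).continuous.intervalIntegrable _ _)

theorem integral_eval_mul_eval_iterate_derivative {a b : ℝ} (p : ℝ[X]) {k : ℕ} {w : ℝ[X]}
    (hw : ∀ m < k, (derivative^[m] w).eval a = 0 ∧ (derivative^[m] w).eval b = 0) :
    ∫ x in a..b, p.eval x * (derivative^[k] w).eval x
      = (-1) ^ k * ∫ x in a..b, (derivative^[k] p).eval x * w.eval x := by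
  induction k generalizing w with
  | zero => simp
  | succ k ih =>
    have hw' : ∀ m < k, (derivative^[m] (derivative w)).eval a = 0 ∧
        (derivative^[m] (derivative w)).eval b = 0 := fun m hm => hw (m + 1) (by omega)
    obtain ⟨ha, hb⟩ := hw 0 k.succ_pos
    rw [Function.iterate_succ_apply, ih hw', integral_eval_mul_eval_derivative,
      Function.iterate_succ_apply']
    simp only [Function.iterate_zero_apply] at ha hb
    simp only [ha, hb, mul_zero, sub_zero, zero_sub]
    ring

end Polynomial

theorem integral_sub_pow_mul_sub_pow (a b : ℝ) (m n : ℕ) :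
    ∫ x in a..b, (x - a) ^ m * (b - x) ^ n
      = m ! * n ! / (m + n + 1)! * (b - a) ^ (m + n + 1) := by
  induction n generalizing m with
  | zero =>
    simp only [pow_zero, mul_one, add_zero, factorial_zero, cast_one,
      intervalIntegral.integral_comp_sub_right (fun x => x ^ m), sub_self, integral_pow]
    rw [factorial_succ]; push_cast
    field_simp
    simp
  | succ n ih =>
    have hu : ∀ x ∈ Set.uIcc a b,
        HasDerivAt (fun x => (b - x) ^ (n + 1)) (-((n + 1) * (b - x) ^ n)) x := fun x _ =>
      (((hasDerivAt_id' x).const_sub b).fun_pow (n + 1)).congr_deriv (by simp)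
    have hv : ∀ x ∈ Set.uIcc a b,
        HasDerivAt (fun x => (x - a) ^ (m + 1) / (m + 1)) ((x - a) ^ m) x := fun x _ =>
      ((((hasDerivAt_id' x).sub_const a).fun_pow (m + 1)).div_const ((m : ℝ) + 1)).congr_deriv
        (by field_simp; simp)
    have ibp := intervalIntegral.integral_mul_deriv_eq_deriv_mul hu hv
      ((by fun_prop : Continuous _).intervalIntegrable _ _)
      ((by fun_prop : Continuous _).intervalIntegrable _ _)
    have hrw : ∫ x in a..b, -((n + 1 : ℝ) * (b - x) ^ n) * ((x - a) ^ (m + 1) / (m + 1))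
        = -((n + 1) / (m + 1) * ∫ x in a..b, (x - a) ^ (m + 1) * (b - x) ^ n) := by
      rw [← intervalIntegral.integral_const_mul, ← intervalIntegral.integral_neg]
      congr 1; ext x; ring
    simp only [sub_self, zero_pow (succ_ne_zero _), zero_div, mul_zero, zero_mul, hrw, ih] at ibp
    rw [show (fun x => (x - a) ^ m * (b - x) ^ (n + 1)) = fun x => (b - x) ^ (n + 1) * (x - a) ^ m
      from funext fun x => mul_comm _ _, ibp]
    rw [show m + (n + 1) + 1 = m + 1 + n + 1 by ring, factorial_succ m, factorial_succ n]
    push_cast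
    field_simp
    ring

section Orthogonal

variable {a b : ℝ}

theorem integral_eval_mul_eval_eq_sub_C_mul_add (p q r : ℝ[X]) (c : ℝ) :
    ∫ x in a..b, p.eval x * q.eval x
      = (∫ x in a..b, (p - C c * r).eval x * q.eval x)
        + c * ∫ x in a..b, r.eval x * q.eval x := by
  rw [← intervalIntegral.integral_const_mul, ← intervalIntegral.integral_add
    (intervalIntegrable_eval_mul_eval _ _ _ _)
    ((intervalIntegrable_eval_mul_eval _ _ _ _).const_mul c)]
  congr 1 with x
  simp only [eval_sub, eval_mul, eval_C]
  ring

theorem integral_eval_mul_eval_eq_of_orthogonal {r p : ℝ[X]} {k : ℕ} (hr : r.degree = k)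
    (horth : ∀ q : ℝ[X], q.degree < k → ∫ x in a..b, q.eval x * r.eval x = 0)
    (hp : p.degree ≤ k) :
    ∫ x in a..b, p.eval x * r.eval x
      = p.coeff k / r.coeff k * ∫ x in a..b, r.eval x * r.eval x := by
  rw [integral_eval_mul_eval_eq_sub_C_mul_add _ _ r (p.coeff k / r.coeff k),
    horth _ (degree_sub_C_div_mul_lt hr hp), zero_add]

theorem coeff_sq_mul_integral_eq_of_orthogonal {p r : ℝ[X]} {k : ℕ}
    (hp : p.degree = k) (hr : r.degree = k)
    (hp_orth : ∀ q : ℝ[X], q.degree < k → ∫ x in a..b, q.eval x * p.eval x = 0)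
    (hr_orth : ∀ q : ℝ[X], q.degree < k → ∫ x in a..b, q.eval x * r.eval x = 0) :
    p.coeff k ^ 2 * ∫ x in a..b, r.eval x * r.eval x
      = r.coeff k ^ 2 * ∫ x in a..b, p.eval x * p.eval x := by
  have hpr := integral_eval_mul_eval_eq_of_orthogonal hr hr_orth hp.le
  have hrp := integral_eval_mul_eval_eq_of_orthogonal hp hp_orth hr.le
  simp only [mul_comm (r.eval _)] at hrp
  have hpk := coeff_ne_zero_of_eq_degree hp
  have hrk := coeff_ne_zero_of_eq_degree hr
  rw [hpr] at hrp
  generalize ∫ x in a..b, r.eval x * r.eval x = I at hrp ⊢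
  generalize ∫ x in a..b, p.eval x * p.eval x = J at hrp ⊢
  field_simp at hrp
  linear_combination hrp

theorem integral_eval_mul_eval_eq_zero_of_orthonormal {Q : ℕ → ℝ[X]}
    (hdeg : ∀ k, (Q k).degree = k)
    (horth : ∀ j k, ∫ x in a..b, (Q j).eval x * (Q k).eval x = if j = k then 1 else 0)
    {p : ℝ[X]} {k : ℕ} (hp : p.degree < k) :
    ∫ x in a..b, p.eval x * (Q k).eval x = 0 := by
  suffices ∀ n : ℕ, ∀ p : ℝ[X], p.degree < n → ∀ l : ℕ, n ≤ l →
      ∫ x in a..b, p.eval x * (Q l).eval x = 0 from this k p hp k le_rfl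
  intro n
  induction n with
  | zero =>
    intro p hp l _
    have : p = 0 := by ext m; simpa using (degree_lt_iff_coeff_zero p 0).1 hp m m.zero_le
    simp [this]
  | succ n ih =>
    intro p hp l hl
    rw [integral_eval_mul_eval_eq_sub_C_mul_add _ _ (Q n) (p.coeff n / (Q n).coeff n),
      ih _ (degree_sub_C_div_mul_lt (hdeg n) (Order.le_of_lt_succ hp)) l (by omega),
      horth, if_neg (by omega), mul_zero, add_zero]

end Orthogonal

section Rodrigues

variable (a b : ℝ) (k : ℕ)

noncomputable def rodriguesWeight : ℝ[X] := ((X - C a) * (X - C b)) ^ k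

/-- Rodrigues' formula: `k! (b - a)^k` times the degree-`k` Legendre polynomial of `[a, b]`. -/
noncomputable def rodrigues : ℝ[X] := derivative^[k] (rodriguesWeight a b k)

theorem rodriguesWeight_monic : (rodriguesWeight a b k).Monic :=
  ((monic_X_sub_C a).mul (monic_X_sub_C b)).pow k

theorem natDegree_rodriguesWeight : (rodriguesWeight a b k).natDegree = 2 * k := by
  rw [rodriguesWeight, natDegree_pow, natDegree_mul (X_sub_C_ne_zero a) (X_sub_C_ne_zero b),
    natDegree_X_sub_C, natDegree_X_sub_C, mul_comm]

theorem eval_iterate_derivative_rodriguesWeight {m : ℕ} (hm : m < k) :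
    (derivative^[m] (rodriguesWeight a b k)).eval a = 0 ∧
      (derivative^[m] (rodriguesWeight a b k)).eval b = 0 := by
  rw [rodriguesWeight, mul_pow]
  exact ⟨isRoot_iterate_derivative_of_pow_dvd (dvd_mul_right _ _) hm,
    isRoot_iterate_derivative_of_pow_dvd (dvd_mul_left _ _) hm⟩

theorem coeff_rodrigues : (rodrigues a b k).coeff k = k ! * k.centralBinom := by
  have := (rodriguesWeight_monic a b k).coeff_natDegree
  rw [natDegree_rodriguesWeight, two_mul] at this
  rw [rodrigues, coeff_iterate_derivative, this, nsmul_one, descFactorial_eq_factorial_mul_choose,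
    centralBinom_eq_two_mul_choose, two_mul]
  push_cast; ring

theorem degree_rodrigues : (rodrigues a b k).degree = k := by
  refine le_antisymm ?_ (le_degree_of_ne_zero ?_)
  · refine (degree_le_natDegree).trans ?_
    have := natDegree_iterate_derivative (rodriguesWeight a b k) k
    rw [natDegree_rodriguesWeight, two_mul, Nat.add_sub_cancel] at this
    exact_mod_cast this
  · rw [coeff_rodrigues]
    exact mul_ne_zero (by positivity) (by exact_mod_cast (centralBinom_pos k).ne')

variable {a b k}

theorem integral_eval_mul_rodrigues_eq_zero {p : ℝ[X]} (hp : p.degree < k) :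
    ∫ x in a..b, p.eval x * (rodrigues a b k).eval x = 0 := by
  rw [rodrigues, integral_eval_mul_eval_iterate_derivative p
      (fun m hm => eval_iterate_derivative_rodriguesWeight a b k hm),
    iterate_derivative_eq_zero_of_degree_lt hp]
  simp

theorem integral_rodrigues_mul_self :
    ∫ x in a..b, (rodrigues a b k).eval x * (rodrigues a b k).eval x
      = k ! ^ 2 * (b - a) ^ (2 * k + 1) / (2 * k + 1) := by
  have hD : derivative^[k] (rodrigues a b k) = C ((2 * k)! : ℝ) := by
    rw [rodrigues, ← Function.iterate_add_apply, ← two_mul, ← natDegree_rodriguesWeight a b k,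
      iterate_derivative_natDegree, (rodriguesWeight_monic a b k).leadingCoeff, mul_one]
  have hw : ∀ x, (rodriguesWeight a b k).eval x = (-1) ^ k * ((x - a) ^ k * (b - x) ^ k) := by
    intro x
    simp only [rodriguesWeight, eval_pow, eval_mul, eval_sub, eval_X, eval_C]
    rw [show (x - a) * (x - b) = -1 * ((x - a) * (b - x)) by ring, mul_pow, mul_pow]
  nth_rewrite 2 [rodrigues]
  rw [integral_eval_mul_eval_iterate_derivative _
      (fun m hm => eval_iterate_derivative_rodriguesWeight a b k hm), hD]
  simp only [eval_C, hw]
  rw [intervalIntegral.integral_const_mul, intervalIntegral.integral_const_mul,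
    integral_sub_pow_mul_sub_pow, show k + k + 1 = 2 * k + 1 by ring, factorial_succ]
  push_cast
  field_simp
  rw [← pow_mul, pow_mul', neg_one_sq, one_pow, one_mul]

end Rodrigues

section Orthonormal

variable {a b : ℝ} {Q : ℕ → ℝ[X]}

theorem coeff_sq_of_orthonormal (hab : a < b) (hdeg : ∀ k, (Q k).degree = k)
    (horth : ∀ j k, ∫ x in a..b, (Q j).eval x * (Q k).eval x = if j = k then 1 else 0)
    (k : ℕ) :
    (Q k).coeff k ^ 2 = (2 * k + 1) * k.centralBinom ^ 2 / (b - a) ^ (2 * k + 1) := by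
  have h := coeff_sq_mul_integral_eq_of_orthogonal (hdeg k) (degree_rodrigues a b k)
    (fun q hq => integral_eval_mul_eval_eq_zero_of_orthonormal hdeg horth hq)
    (fun q hq => integral_eval_mul_rodrigues_eq_zero hq)
  rw [integral_rodrigues_mul_self, coeff_rodrigues, horth, if_pos rfl] at h
  have : 0 < b - a := sub_pos.2 hab
  field_simp at h ⊢
  linear_combination h

theorem coeff_div_coeff_succ_of_orthonormal (hab : a < b) (hdeg : ∀ k, (Q k).degree = k)
    (hlead : ∀ k, 0 < (Q k).coeff k)
    (horth : ∀ j k, ∫ x in a..b, (Q j).eval x * (Q k).eval x = if j = k then 1 else 0)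
    (k : ℕ) :
    (Q k).coeff k / (Q (k + 1)).coeff (k + 1)
      = (k + 1) * (b - a) / (2 * √((2 * k + 1) * (2 * k + 3))) := by
  have hba : 0 < b - a := sub_pos.2 hab
  refine (pow_left_inj₀ (div_pos (hlead k) (hlead (k + 1))).le (by positivity) two_ne_zero).1 ?_
  have hbinom : ((k + 1).centralBinom : ℝ) = 2 * (2 * k + 1) * k.centralBinom / (k + 1) := by
    rw [eq_div_iff (by positivity), mul_comm]
    exact_mod_cast succ_mul_centralBinom_succ k
  rw [div_pow, div_pow, coeff_sq_of_orthonormal hab hdeg horth,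
    coeff_sq_of_orthonormal hab hdeg horth, mul_pow, mul_pow, Real.sq_sqrt (by positivity)]
  have : (k.centralBinom : ℝ) ≠ 0 := by exact_mod_cast (centralBinom_pos k).ne'
  rw [hbinom]
  push_cast
  field_simp
  ring

end Orthonormal

/-- Let `T > 0` and `(Q k)` the orthonormal polynomials on `[0,T]` (degree `k`,
positive leading coefficient). Then for every `k ≥ 0`,
`c_{k,k+1} = ∫₀ᵀ (∫₀ᵗ Q k) Q (k+1) dt = T · α k` with
`α k = 1/(2√((2k+1)(2k+3)))`. -/
theorem stmt_3 (T : ℝ) (hT : 0 < T)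
    (Q : ℕ → Polynomial ℝ)
    (hQdeg : ∀ k, (Q k).natDegree = k)
    (hQlead : ∀ k, 0 < (Q k).leadingCoeff)
    (hQorth : ∀ j k, ∫ x in (0:ℝ)..T, (Q j).eval x * (Q k).eval x
        = if j = k then 1 else 0) :
    ∀ k : ℕ, (∫ t in (0:ℝ)..T, (∫ s in (0:ℝ)..t, (Q k).eval s) * (Q (k + 1)).eval t)
        = T * (1 / (2 * Real.sqrt ((2 * (k : ℝ) + 1) * (2 * (k : ℝ) + 3)))) := by
  intro k
  have hdeg : ∀ k, (Q k).degree = k := fun k => by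
    rw [degree_eq_natDegree (leadingCoeff_ne_zero.1 (hQlead k).ne'), hQdeg]
  have hlead : ∀ k, 0 < (Q k).coeff k := fun k => by
    simpa only [leadingCoeff, hQdeg] using hQlead k
  have hF : (antideriv (Q k)).degree ≤ ↑(k + 1) :=
    degree_le_of_natDegree_le ((natDegree_antideriv_le (Q k)).trans_eq (by rw [hQdeg]))
  simp only [integral_eval_eq_eval_antideriv]
  rw [integral_eval_mul_eval_eq_of_orthogonal (hdeg (k + 1))
      (fun q hq => integral_eval_mul_eval_eq_zero_of_orthonormal hdeg hQorth hq) hF,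
    hQorth, if_pos rfl, mul_one, coeff_antideriv_succ, div_right_comm,
    coeff_div_coeff_succ_of_orthonormal hT hdeg hlead hQorth k, sub_zero]
  field_simp
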